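/- Let g be a finite simple Lie algebra of type A_n, B_n, C_n, D_{n+1}, or G_2 and let a ∈ I. Given any element of RC(∞), one can always find a representative (ν,J,λ) ∈ RC^{EV} (a dominant weight λ ≥ λ_ν with (ν,J) ∈ RC(λ)) such that f_a(ν,J) is a valid rigged configuration for λ. -/
import Mathlib


/-!
Common framework for formalizing "Connecting marginally large tableaux and
rigged configurations via crystals" (Salisbury–Scrimshaw).

Rigged configurations, vacancy numbers, validity, the Kashiwara operators on
rigged configurations, `RC(∞)`, `RC(λ)`, `λ_ν`, `RC^V`, `RC^{EV}` are all
defined concretely.  The combinatorics of (marginally large / large)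
tableaux, Kirillov–Reshetikhin crystals `B^{⊗λ}`, and the
Kerov–Kirillov–Reshetikhin style bijection `Φ` (whose algorithmic definition
via `δ` is far beyond the scope of this file) are packaged abstractly in the
structure `KRSetup`, whose fields record the previously–known properties of
these objects (`Φ` is a shape-preserving bijection between rigged
configurations valid for `λ` and elements of `B^{⊗λ}`, and is a classical
crystal isomorphism).
-/

namespace RCMLT

/-- The five families of finite simple Lie algebras considered in the paper:
`A n` is `A_n`, `B n` is `B_n`, `C n` is `C_n`, `D n` is `D_{n+1}`, and `G` is `G_2`. -/
inductive GType : Type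
  | A (n : ℕ)
  | B (n : ℕ)
  | C (n : ℕ)
  | D (n : ℕ)   -- this stands for `D_{n+1}`
  | G
deriving DecidableEq

/-- The number of nodes of the Dynkin diagram, so that the index set is
`I = Fin (rank g)` (the element `a : Fin (rank g)` represents the node `a+1`
in the paper's indexing). -/
def rank : GType → ℕ
  | .A n => n
  | .B n => n
  | .C n => n
  | .D n => n + 1
  | .G => 2

/-- Entries of the Cartan matrix of a simply laced chain (type `A`). -/
def chainE (a b : ℕ) : ℤ :=
  if a = b then 2 else if a + 1 = b ∨ b + 1 = a then -1 else 0

/-- The Cartan matrix `A_{ab} = ⟨h_a, α_b⟩` of `g`. -/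
def cartan : (g : GType) → Fin (rank g) → Fin (rank g) → ℤ
  | .A _, a, b => chainE a.val b.val
  | .B n, a, b => if a.val = n - 1 ∧ b.val = n - 2 ∧ 2 ≤ n then -2 else chainE a.val b.val
  | .C n, a, b => if a.val = n - 2 ∧ b.val = n - 1 ∧ 2 ≤ n then -2 else chainE a.val b.val
  | .D n, a, b =>
      if ((a.val = n - 2 ∧ b.val = n) ∨ (a.val = n ∧ b.val = n - 2)) ∧ 2 ≤ n then -1
      else if a.val = n ∨ b.val = n then (if a = b then 2 else 0)
      else chainE a.val b.val
  | .G, a, b => if a = b then 2 else if a.val = 0 then -3 else -1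

/-- Integral weights, written in the coordinates of the fundamental weights:
`λ : Wt g` stands for `Σ_a (λ a) Λ_a`, so that `⟨h_a, λ⟩ = λ a`. -/
abbrev Wt (g : GType) := Fin (rank g) → ℤ

/-- A rigged configuration `(ν, J)`: for each node `a`, the multiset of
strings `(i, x)` (a part of length `i` of the partition `ν^{(a)}` together
with its rigging `x`) of `(ν, J)^{(a)}`. -/
abbrev Cfg (g : GType) := Fin (rank g) → Multiset (ℕ × ℤ)

/-- The empty rigged configuration `(ν_∅, J_∅)`. -/
def emptyCfg (g : GType) : Cfg g := fun _ => 0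

/-- The coordinate vector of the fundamental weight `Λ_r`. -/
def fw (g : GType) (r : Fin (rank g)) : Wt g := fun b => if b = r then 1 else 0

/-- `λ` is dominant: all coefficients in the fundamental weights are `≥ 0`. -/
def Dominant (g : GType) (lam : Wt g) : Prop := ∀ a, 0 ≤ lam a

/-- `|ν^{(a)}|`, the number of boxes of the partition recorded by `m`. -/
def psize (m : Multiset (ℕ × ℤ)) : ℤ := (m.map fun s => (s.1 : ℤ)).sum

/-- The vacancy numbers
`p_i^{(a)}(ν; λ) = ⟨h_a, λ⟩ − Σ_{(b,j)} A_{ab} min(i,j) m_j^{(b)}`. -/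
def vac (g : GType) (lam : Wt g) (ν : Cfg g) (a : Fin (rank g)) (i : ℕ) : ℤ :=
  lam a - ∑ b, cartan g a b * ((ν b).map fun s => ((min i s.1 : ℕ) : ℤ)).sum

/-- `(ν, J)` is valid for `λ`: every rigging `x` of a string of length `i` in
`ν^{(a)}` satisfies `x ≤ p_i^{(a)}(ν; λ)`. -/
def Valid (g : GType) (lam : Wt g) (ν : Cfg g) : Prop :=
  ∀ a : Fin (rank g), ∀ s ∈ ν a, s.2 ≤ vac g lam ν a s.1

/-- The Kashiwara lowering operator `f_a` on rigged configurations, as a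
relation: `fRel g a ν ν'` holds iff `f_a (ν, J) = (ν', J')`.  Let `x` be the
smallest rigging in `(ν,J)^{(a)}`.  If `x > 0` (in particular if `ν^{(a)}` is
empty) a string `(1, -1)` is added; otherwise a string `(ℓ, x)` with `ℓ`
maximal is replaced by `(ℓ+1, x-1)`.  All the other riggings are changed so
that all colabels `p_i^{(b)} − x` remain fixed (the colabel differences do
not depend on the weight, so they are computed at weight `0`). -/
def fRel (g : GType) (a : Fin (rank g)) (ν ν' : Cfg g) : Prop :=
  ((∀ s ∈ ν a, 0 < s.2) ∧
     (∀ b, b ≠ a →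
       ν' b = (ν b).map fun s =>
         (s.1, s.2 + vac g (0 : Wt g) ν' b s.1 - vac g (0 : Wt g) ν b s.1)) ∧
     ν' a = (1, -1) ::ₘ ((ν a).map fun s =>
         (s.1, s.2 + vac g (0 : Wt g) ν' a s.1 - vac g (0 : Wt g) ν a s.1))) ∨
  (∃ (l : ℕ) (x : ℤ) (rest : Multiset (ℕ × ℤ)),
     x ≤ 0 ∧ ν a = (l, x) ::ₘ rest ∧
     (∀ s ∈ ν a, x ≤ s.2) ∧ (∀ s ∈ ν a, s.2 = x → s.1 ≤ l) ∧
     (∀ b, b ≠ a →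
       ν' b = (ν b).map fun s =>
         (s.1, s.2 + vac g (0 : Wt g) ν' b s.1 - vac g (0 : Wt g) ν b s.1)) ∧
     ν' a = (l + 1, x - 1) ::ₘ (rest.map fun s =>
         (s.1, s.2 + vac g (0 : Wt g) ν' a s.1 - vac g (0 : Wt g) ν a s.1)))

/-- The Kashiwara raising operator `e_a` on rigged configurations, as a
relation: `eRel g a ν ν'` holds iff `e_a (ν, J) = (ν', J') ≠ 0`.  If the
smallest rigging `x` in `(ν,J)^{(a)}` satisfies `x ≥ 0` then `e_a (ν,J) = 0`
(so no `ν'` is related to `ν`); otherwise a string `(ℓ, x)` with `ℓ` minimal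
is replaced by `(ℓ-1, x+1)` (removed if `ℓ = 1`), and all the other riggings
are changed so that all colabels remain fixed. -/
def eRel (g : GType) (a : Fin (rank g)) (ν ν' : Cfg g) : Prop :=
  ∃ (l : ℕ) (x : ℤ) (rest : Multiset (ℕ × ℤ)),
    x < 0 ∧ ν a = (l, x) ::ₘ rest ∧
    (∀ s ∈ ν a, x ≤ s.2) ∧ (∀ s ∈ ν a, s.2 = x → l ≤ s.1) ∧
    (∀ b, b ≠ a →
      ν' b = (ν b).map fun s =>
        (s.1, s.2 + vac g (0 : Wt g) ν' b s.1 - vac g (0 : Wt g) ν b s.1)) ∧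
    ν' a = (if l = 1 then (0 : Multiset (ℕ × ℤ)) else {(l - 1, x + 1)}) +
      (rest.map fun s =>
        (s.1, s.2 + vac g (0 : Wt g) ν' a s.1 - vac g (0 : Wt g) ν a s.1))

/-- `RC(∞)`: the set of rigged configurations generated from the empty rigged
configuration by the operators `f_a`. -/
inductive RCInf (g : GType) : Cfg g → Prop
  | empty : RCInf g (emptyCfg g)
  | step {a : Fin (rank g)} {ν ν' : Cfg g} : RCInf g ν → fRel g a ν ν' → RCInf g ν'

/-- `RC(λ)`: the closure of the empty rigged configuration under the modified
operators `f_a`, where `f_a (ν, J) = 0` whenever the result is not valid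
for `λ`. -/
inductive RCPoly (g : GType) (lam : Wt g) : Cfg g → Prop
  | empty : RCPoly g lam (emptyCfg g)
  | step {a : Fin (rank g)} {ν ν' : Cfg g} :
      RCPoly g lam ν → fRel g a ν ν' → Valid g lam ν' → RCPoly g lam ν'

/-- The dominant weight `λ_ν`:
`λ_ν = Σ_{a < n} (|ν^{(a)}|+1) Λ_a + λ_ν^{(n)}`, where the last part is
`2(|ν^{(n)}|+1) Λ_n` in type `B_n`,
`(max(|ν^{(n)}|, |ν^{(n+1)}|)+1)(Λ_n + Λ_{n+1})` in type `D_{n+1}`, and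
`(|ν^{(n)}|+1) Λ_n` otherwise. -/
def lambdaNu : (g : GType) → Cfg g → Wt g
  | .A _, ν => fun a => psize (ν a) + 1
  | .B n, ν => fun a => if a.val = n - 1 then 2 * (psize (ν a) + 1) else psize (ν a) + 1
  | .C _, ν => fun a => psize (ν a) + 1
  | .D n, ν => fun a =>
      if a.val = n - 1 ∨ a.val = n then
        max (psize (ν ⟨n - 1, by simp only [rank]; omega⟩))
            (psize (ν ⟨n, by simp only [rank]; omega⟩)) + 1
      else psize (ν a) + 1
  | .G, ν => fun a => psize (ν a) + 1

/-- `(ν, J, λ) ∈ RC^{EV}`: the representative `(ν, J)` lies in `RC(λ)` for a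
dominant weight `λ ≥ λ_ν` (componentwise in the fundamental-weight
coordinates). -/
def RCEV (g : GType) (ν : Cfg g) (lam : Wt g) : Prop :=
  Dominant g lam ∧ RCPoly g lam ν ∧ ∀ a, lambdaNu g ν a ≤ lam a

/-- The coordinates of `wt (ν, J) = −Σ_a |ν^{(a)}| α_a`:
`⟨h_b, wt (ν, J)⟩ = −Σ_a |ν^{(a)}| A_{ba}`. -/
def wtRC (g : GType) (ν : Cfg g) (b : Fin (rank g)) : ℤ :=
  -∑ a, psize (ν a) * cartan g b a

/-- `k`-fold iteration of the raising operator `e_a`. -/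
def eIter (g : GType) (a : Fin (rank g)) : ℕ → Cfg g → Cfg g → Prop
  | 0, ν, ν' => ν' = ν
  | k + 1, ν, ν'' => ∃ ν', eRel g a ν ν' ∧ eIter g a k ν' ν''

/-- `ε_a (ν, J) = max {k ≥ 0 | e_a^k (ν, J) ≠ 0}`. -/
noncomputable def epsRC (g : GType) (a : Fin (rank g)) (ν : Cfg g) : ℕ :=
  sSup {k : ℕ | ∃ μ, eIter g a k ν μ}

/-- `φ_a (ν, J) = ε_a (ν, J) + ⟨h_a, wt (ν, J)⟩`. -/
noncomputable def phiRC (g : GType) (a : Fin (rank g)) (ν : Cfg g) : ℤ :=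
  (epsRC g a ν : ℤ) + wtRC g ν a

/-- An abstract `U_q(g)`-crystal structure on a set `B`: maps
`e_a, f_a : B → B ⊔ {0}`, `ε_a, φ_a : B → ℤ` and `wt : B → P` (in
fundamental-weight coordinates) such that (1) `f_a b = b'` iff `b = e_a b'`;
(2) `wt (f_a b) = wt b − α_a` when `f_a b ≠ 0`; (3) `φ_a − ε_a = ⟨h_a, wt⟩`. -/
structure CrystalStruct (g : GType) (B : Type) where
  e : Fin (rank g) → B → Option B
  f : Fin (rank g) → B → Option B
  wt : B → Wt g
  eps : Fin (rank g) → B → ℤ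
  phi : Fin (rank g) → B → ℤ
  ef_iff : ∀ a b b', f a b = some b' ↔ e a b' = some b
  wt_f : ∀ a b b', f a b = some b' → ∀ c, wt b' c = wt b c - cartan g c a
  phi_eps : ∀ a b, phi a b - eps a b = wt b a

/-- Abstract packaging of the tableaux models (`⊔_{λ} B^{⊗λ}`, the large,
marginally large and semistandard tableaux inside it, basic columns) together
with the bijection `Φ : RC(B^{⊗λ}) → B^{⊗λ}` of
Kerov–Kirillov–Reshetikhin/Okado–Schilling–Shimozono type and its previously
known properties (it is a shape-preserving bijection and a classical crystal
isomorphism), and the marginally large tableaux crystal operators of `T(∞)`. -/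
structure KRSetup (g : GType) where
  /-- elements of `⊔_{λ ∈ P̂⁺} B^{⊗λ}` (tensor products of columns). -/
  Tab : Type
  /-- the weight `λ` with `t ∈ B^{⊗λ}`; for a tableau, its shape. -/
  shape : Tab → Wt g
  /-- the classical crystal operator `f_a` on `B^{⊗λ}`. -/
  ftab : Fin (rank g) → Tab → Option Tab
  /-- the classical crystal operator `e_a` on `B^{⊗λ}`. -/
  etab : Fin (rank g) → Tab → Option Tab
  /-- `t` is (the column reading of) a semistandard tableau. -/
  IsTableau : Tab → Prop
  /-- `t` is a large tableau. -/
  Large : Tab → Prop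
  /-- `t` is a marginally large tableau. -/
  MarginallyLarge : Tab → Prop
  /-- `t` and `t'` differ only by basic columns. -/
  BasicEquiv : Tab → Tab → Prop
  basicEquiv_equiv : Equivalence BasicEquiv
  ml_large : ∀ t, MarginallyLarge t → Large t
  /-- the highest weight tableau `T_λ` (a tensor product of basic columns). -/
  highest : Wt g → Tab
  highest_shape : ∀ lam, shape (highest lam) = lam
  highest_tab : ∀ lam, IsTableau (highest lam)
  /-- insertion of one additional basic column of height `r`. -/
  addBasic : Fin (rank g) → Tab → Tab
  addBasic_shape : ∀ r t, shape (addBasic r t) = shape t + fw g r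
  addBasic_equiv : ∀ r t, BasicEquiv (addBasic r t) t
  /-- the bijection `Φ : RC(B^{⊗λ}) → B^{⊗λ}`. -/
  Phi : Wt g → Cfg g → Tab
  /-- the inverse bijection `Φ⁻¹ : B^{⊗λ} → RC(B^{⊗λ})`. -/
  PhiInv : Wt g → Tab → Cfg g
  phi_shape : ∀ lam ν, Valid g lam ν → shape (Phi lam ν) = lam
  phiInv_valid : ∀ lam t, shape t = lam → Valid g lam (PhiInv lam t)
  phi_left_inv : ∀ lam ν, Valid g lam ν → PhiInv lam (Phi lam ν) = ν
  phi_right_inv : ∀ lam t, shape t = lam → Phi lam (PhiInv lam t) = t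
  /-- `Φ` is a classical crystal isomorphism (Theorem 4.6 of the paper). -/
  phi_f : ∀ lam a ν ν', Valid g lam ν → fRel g a ν ν' → Valid g lam ν' →
      ftab a (Phi lam ν) = some (Phi lam ν')
  phi_f_none : ∀ lam a ν ν', Valid g lam ν → fRel g a ν ν' → ¬ Valid g lam ν' →
      ftab a (Phi lam ν) = none
  phi_e : ∀ lam a ν ν', Valid g lam ν → eRel g a ν ν' →
      etab a (Phi lam ν) = some (Phi lam ν')
  phi_e_none : ∀ lam a ν, Valid g lam ν → ¬(∃ ν', eRel g a ν ν') →
      etab a (Phi lam ν) = none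
  /-- the (total) lowering operator `f_a` of the marginally large tableaux
  model `T(∞)`. -/
  fml : Fin (rank g) → Tab → Tab
  /-- the raising operator `e_a` of the marginally large tableaux model. -/
  eml : Fin (rank g) → Tab → Option Tab
  /-- the weight function of the marginally large tableaux model. -/
  wtml : Tab → Wt g
  epsml : Fin (rank g) → Tab → ℤ
  phiml : Fin (rank g) → Tab → ℤ
  /-- `f_a` on `T(∞)` agrees, up to basic columns, with `f_a` computed on a
  suitable large representative (Lemma 3.2 of Hong–Lee). -/
  fml_spec : ∀ a T, IsTableau T → MarginallyLarge T →
      MarginallyLarge (fml a T) ∧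
      ∃ T₁ T₂, BasicEquiv T₁ T ∧ ftab a T₁ = some T₂ ∧ BasicEquiv T₂ (fml a T)
  eml_spec : ∀ a T T', IsTableau T → MarginallyLarge T → eml a T = some T' →
      MarginallyLarge T' ∧
      ∃ T₁ T₂, BasicEquiv T₁ T ∧ etab a T₁ = some T₂ ∧ BasicEquiv T₂ T'
  phiml_eps : ∀ a T, phiml a T - epsml a T = wtml T a
  wtml_fml : ∀ a T c, wtml (fml a T) c = wtml T c - cartan g c a

/-- The map `Ψ : RC(∞) → T(∞)`: project `(ν, J)` to `RC(λ_ν)`, apply `Φ`,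
and regard the result as a marginally large tableau. -/
def KRSetup.Psi {g : GType} (S : KRSetup g) (ν : Cfg g) : S.Tab :=
  S.Phi (lambdaNu g ν) ν

/-- The map `Ξ : T(∞) → RC(∞)`: project `T` to `T(λ_T)` (where `λ_T` is the
shape of `T`), embed it in `B^{⊗λ_T}` as the tensor product of its columns,
and apply `Φ⁻¹`. -/
def KRSetup.Xi {g : GType} (S : KRSetup g) (T : S.Tab) : Cfg g :=
  S.PhiInv (S.shape T) T

/-- The connected component of `B^{⊗λ}` generated by the highest weight
element `T_λ`, i.e. the embedded copy of `T(λ)`. -/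
inductive TabGen {g : GType} (S : KRSetup g) (lam : Wt g) : S.Tab → Prop
  | base : TabGen S lam (S.highest lam)
  | step {a : Fin (rank g)} {T T' : S.Tab} :
      TabGen S lam T → S.ftab a T = some T' → TabGen S lam T'

/-- An abstract family of highest weight crystals `B(λ)` together with the
natural projections `p : B(λ) → B(μ) ⊔ {0}`, `f_{a_k} ⋯ f_{a_1} u_λ ↦
f_{a_k} ⋯ f_{a_1} u_μ`. -/
structure HWFamily (g : GType) where
  B : Wt g → Type
  crys : ∀ lam, CrystalStruct g (B lam)
  /-- the highest weight element `u_λ`. -/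
  hw : ∀ lam, B lam
  hw_e : ∀ lam a, (crys lam).e a (hw lam) = none
  hw_wt : ∀ lam, (crys lam).wt (hw lam) = lam
  /-- the natural projection `B(λ) → B(μ) ⊔ {0}`. -/
  proj : ∀ lam mu, B lam → Option (B mu)
  proj_hw : ∀ lam mu, proj lam mu (hw lam) = some (hw mu)
  proj_f : ∀ lam mu a b b', (crys lam).f a b = some b' →
      proj lam mu b' = ((proj lam mu b).bind ((crys mu).f a))

/-- An abstract model of `B(∞)` together with a family of highest weight
crystals `B(λ)` and the natural projections `B(∞) → B(λ) ⊔ {0}`. -/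
structure BInfSetup (g : GType) extends HWFamily g where
  Binf : Type
  icrys : CrystalStruct g Binf
  /-- the highest weight element `u_∞`. -/
  uinf : Binf
  uinf_e : ∀ a, icrys.e a uinf = none
  uinf_wt : ∀ b, icrys.wt uinf b = 0
  /-- the natural projection `B(∞) → B(λ) ⊔ {0}`. -/
  projInf : ∀ lam, Binf → Option (B lam)
  projInf_hw : ∀ lam, projInf lam uinf = some (hw lam)
  projInf_f : ∀ lam a b b', icrys.f a b = some b' →
      projInf lam b' = ((projInf lam b).bind ((crys lam).f a))



section Aux

/-- The vacancy numbers only depend on the underlying partitions. -/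
lemma vac_congr {g : GType} {ν μ : Cfg g}
    (h : ∀ b, (ν b).map Prod.fst = (μ b).map Prod.fst)
    (lam : Wt g) (a : Fin (rank g)) (i : ℕ) :
    vac g lam ν a i = vac g lam μ a i := by
  unfold vac
  congr 1
  refine Finset.sum_congr rfl fun b _ => ?_
  congr 1
  have key : ∀ (m : Multiset (ℕ × ℤ)),
      (m.map fun s => ((min i s.1 : ℕ) : ℤ)) =
        (m.map Prod.fst).map (fun j => ((min i j : ℕ) : ℤ)) := by
    intro m; rw [Multiset.map_map]; rfl
  rw [key, key, h b]

lemma vac_eq_add (g : GType) (lam : Wt g) (ν : Cfg g) (a : Fin (rank g)) (i : ℕ) :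
    vac g lam ν a i = lam a + vac g (0 : Wt g) ν a i := by
  unfold vac
  simp only [Pi.zero_apply]
  ring

/-- `f_a` is total on rigged configurations. -/
lemma fRel_total (g : GType) (a : Fin (rank g)) (ν : Cfg g) :
    ∃ ν', fRel g a ν ν' := by
  by_cases hpos : ∀ s ∈ ν a, 0 < s.2
  · set μ : Cfg g := Function.update ν a (((1 : ℕ), (0 : ℤ)) ::ₘ ν a) with hμ
    set adj : Fin (rank g) → ℕ × ℤ → ℕ × ℤ :=
      fun b s => (s.1, s.2 + vac g 0 μ b s.1 - vac g 0 ν b s.1) with hadj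
    set ν' : Cfg g := fun b =>
      if b = a then ((1 : ℕ), (-1 : ℤ)) ::ₘ (ν a).map (adj a) else (ν b).map (adj b) with hν'
    have hshape : ∀ b, (ν' b).map Prod.fst = (μ b).map Prod.fst := by
      intro b
      by_cases hb : b = a
      · subst hb
        simp [ν', μ, Multiset.map_map, adj]
      · simp [ν', μ, hb, Function.update_of_ne hb, Multiset.map_map, adj]
    have hvac : ∀ b i, vac g (0 : Wt g) ν' b i = vac g (0 : Wt g) μ b i :=
      fun b i => vac_congr hshape _ _ _
    have hfun : ∀ b, (fun s : ℕ × ℤ => (s.1, s.2 + vac g 0 ν' b s.1 - vac g 0 ν b s.1)) = adj b := by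
      intro b; funext s; simp [adj, hvac]
    refine ⟨ν', Or.inl ⟨hpos, ?_, ?_⟩⟩
    · intro b hb
      rw [hfun b]
      simp [ν', hb]
    · rw [hfun a]
      simp [ν']
  · push_neg at hpos
    obtain ⟨t, ht, ht2⟩ := hpos
    -- the minimal rigging
    have hSne : (((ν a).map Prod.snd).toFinset).Nonempty :=
      ⟨t.2, by simp only [Multiset.mem_toFinset]; exact Multiset.mem_map_of_mem _ ht⟩
    set x : ℤ := (((ν a).map Prod.snd).toFinset).min' hSne with hx
    have hx_le : ∀ s ∈ ν a, x ≤ s.2 := by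
      intro s hs
      exact Finset.min'_le _ _ (by simp only [Multiset.mem_toFinset]; exact Multiset.mem_map_of_mem _ hs)
    have hx0 : x ≤ 0 := le_trans (hx_le t ht) ht2
    have hx_mem : ∃ s ∈ ν a, s.2 = x := by
      have := Finset.min'_mem (((ν a).map Prod.snd).toFinset) hSne
      rw [Multiset.mem_toFinset, Multiset.mem_map] at this
      obtain ⟨s, hs, hs2⟩ := this
      exact ⟨s, hs, hs2⟩
    obtain ⟨w, hw, hw2⟩ := hx_mem
    -- the maximal length among strings with rigging x
    have hTne : (((ν a).toFinset.filter fun s => s.2 = x).image Prod.fst).Nonempty := by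
      refine ⟨w.1, Finset.mem_image_of_mem _ ?_⟩
      simp only [Finset.mem_filter, Multiset.mem_toFinset]
      exact ⟨hw, hw2⟩
    set l : ℕ := (((ν a).toFinset.filter fun s => s.2 = x).image Prod.fst).max' hTne with hl
    have hl_le : ∀ s ∈ ν a, s.2 = x → s.1 ≤ l := by
      intro s hs hs2
      refine Finset.le_max' _ _ (Finset.mem_image_of_mem _ ?_)
      simp only [Finset.mem_filter, Multiset.mem_toFinset]
      exact ⟨hs, hs2⟩
    have hl_mem : ∃ s₀ ∈ ν a, s₀.2 = x ∧ s₀.1 = l := by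
      have := Finset.max'_mem _ hTne
      rw [Finset.mem_image] at this
      obtain ⟨s₀, hs₀, hs₀1⟩ := this
      rw [Finset.mem_filter, Multiset.mem_toFinset] at hs₀
      exact ⟨s₀, hs₀.1, hs₀.2, hs₀1⟩
    obtain ⟨s₀, hs₀mem, hs₀2, hs₀1⟩ := hl_mem
    have hs₀ : s₀ = (l, x) := Prod.ext hs₀1 hs₀2
    set rest : Multiset (ℕ × ℤ) := (ν a).erase s₀ with hrest
    have hcons : ν a = (l, x) ::ₘ rest := by
      rw [← hs₀, hrest, Multiset.cons_erase hs₀mem]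
    set μ : Cfg g := Function.update ν a ((l + 1, (0 : ℤ)) ::ₘ rest) with hμ
    set adj : Fin (rank g) → ℕ × ℤ → ℕ × ℤ :=
      fun b s => (s.1, s.2 + vac g 0 μ b s.1 - vac g 0 ν b s.1) with hadj
    set ν' : Cfg g := fun b =>
      if b = a then (l + 1, x - 1) ::ₘ rest.map (adj a) else (ν b).map (adj b) with hν'
    have hshape : ∀ b, (ν' b).map Prod.fst = (μ b).map Prod.fst := by
      intro b
      by_cases hb : b = a
      · subst hb
        simp [ν', μ, Multiset.map_map, adj]
      · simp [ν', μ, hb, Function.update_of_ne hb, Multiset.map_map, adj]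
    have hvac : ∀ b i, vac g (0 : Wt g) ν' b i = vac g (0 : Wt g) μ b i :=
      fun b i => vac_congr hshape _ _ _
    have hfun : ∀ b, (fun s : ℕ × ℤ => (s.1, s.2 + vac g 0 ν' b s.1 - vac g 0 ν b s.1)) = adj b := by
      intro b; funext s; simp [adj, hvac]
    refine ⟨ν', Or.inr ⟨l, x, rest, hx0, hcons, hx_le, hl_le, ?_, ?_⟩⟩
    · intro b hb
      rw [hfun b]
      simp [ν', hb]
    · rw [hfun a]
      simp [ν']

/-- A bound making `(ν, J)` valid. -/
def bound (g : GType) (ν : Cfg g) (b : Fin (rank g)) : ℤ :=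
  (((ν b).map fun s => (s.2 - vac g 0 ν b s.1).toNat).sum : ℕ)

lemma valid_of_bound (g : GType) (ν : Cfg g) (lam : Wt g)
    (h : ∀ b, bound g ν b ≤ lam b) : Valid g lam ν := by
  intro b s hs
  have h1 : s.2 - vac g 0 ν b s.1 ≤ bound g ν b := by
    refine le_trans (Int.self_le_toNat _) ?_
    unfold bound
    exact_mod_cast Multiset.single_le_sum (s := (ν b).map fun s => (s.2 - vac g 0 ν b s.1).toNat)
      (fun _ _ => Nat.zero_le _) _ (Multiset.mem_map_of_mem _ hs)
  have h2 := vac_eq_add g lam ν b s.1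
  have h3 := h b
  omega

lemma rcinf_poly {g : GType} {ν : Cfg g} (h : RCInf g ν) :
    ∃ lam0 : Wt g, ∀ lam : Wt g, (∀ b, lam0 b ≤ lam b) → RCPoly g lam ν := by
  induction h with
  | empty => exact ⟨0, fun _ _ => .empty⟩
  | @step a ν₀ ν₁ h1 h2 ih =>
    obtain ⟨lam0, h0⟩ := ih
    refine ⟨fun b => max (lam0 b) (bound g ν₁ b), fun lam hlam => ?_⟩
    refine RCPoly.step (h0 lam fun b => le_trans (le_max_left _ _) (hlam b)) h2 ?_
    exact valid_of_bound _ _ _ fun b => le_trans (le_max_right _ _) (hlam b)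

lemma psize_nonneg (m : Multiset (ℕ × ℤ)) : 0 ≤ psize m := by
  refine Multiset.sum_nonneg ?_
  intro x hx
  obtain ⟨s, _, rfl⟩ := Multiset.mem_map.mp hx
  exact Int.natCast_nonneg _

lemma lambdaNu_nonneg (g : GType) (ν : Cfg g) (a : Fin (rank g)) :
    0 ≤ lambdaNu g ν a := by
  cases g with
  | A n => have := psize_nonneg (ν a); simp only [lambdaNu]; omega
  | B n =>
    simp only [lambdaNu]
    split_ifs
    · have := psize_nonneg (ν a); omega
    · have := psize_nonneg (ν a); omega
  | C n => have := psize_nonneg (ν a); simp only [lambdaNu]; omega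
  | D n =>
    simp only [lambdaNu]
    split_ifs
    · have h1 := psize_nonneg (ν ⟨n - 1, by simp only [rank]; omega⟩)
      have h2 := le_max_left (psize (ν ⟨n - 1, by simp only [rank]; omega⟩))
        (psize (ν ⟨n, by simp only [rank]; omega⟩))
      omega
    · have := psize_nonneg (ν a); omega
  | G => have := psize_nonneg (ν a); simp only [lambdaNu]; omega

end Aux

/-- given any element of `RC(∞)`, one can always find a
representative `(ν, J, λ) ∈ RC^{EV}` (a dominant weight `λ ≥ λ_ν` with
`(ν, J) ∈ RC(λ)`) such that `f_a (ν, J)` is a rigged configuration valid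
for `λ`. -/
theorem exists_extra_valid_representative (g : GType) (a : Fin (rank g))
    (ν : Cfg g) (h : RCInf g ν) :
    ∃ lam : Wt g, RCEV g ν lam ∧ ∃ ν', fRel g a ν ν' ∧ Valid g lam ν' := by
  obtain ⟨ν', hf⟩ := fRel_total g a ν
  obtain ⟨lam0, hpoly⟩ := rcinf_poly h
  refine ⟨fun b => max (max (lam0 b) (lambdaNu g ν b)) (bound g ν' b),
    ⟨?_, ?_, ?_⟩, ν', hf, ?_⟩
  · intro b
    exact le_trans (lambdaNu_nonneg g ν b)
      (le_trans (le_max_right _ _) (le_max_left _ _))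
  · exact hpoly _ fun b => le_trans (le_max_left _ _) (le_max_left _ _)
  · intro b
    exact le_trans (le_max_right _ _) (le_max_left _ _)
  · exact valid_of_bound _ _ _ fun b => le_max_right _ _

end RCMLT
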